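/- Consider problem (P) under the surrogate assumption, and suppose (P) has an optimal value F*. Let x ∈ 𝒳 be feasible, and suppose there exist U, τ > 0 and a point x̂ ∈ 𝒳 with c̃_i(x̂|x) ≤ −τ for all i and f̃(x̂|x) + r(x̂) + (L/(1+κ))‖x̂ − x‖^{1+κ} ≤ U. Suppose z* ∈ 𝒳, λ ∈ ℝ^m_{≥0} and l ∈ ∂r(z*) satisfy the first-order conditions of the subproblem (P_x): with d = z* − x, ⟨∇f̃(z*|x) + l + L‖d‖^{κ−1}d + Σ_{i=1}^m λ_i∇c̃_i(z*|x), z − z*⟩ ≥ 0 for all z ∈ 𝒳, c̃_i(z*|x) ≤ 0 and λ_i·c̃_i(z*|x) = 0 for all i. Then Σ_{i=1}^m λ_i ≤ (U − F*)/τ; in particular ‖λ‖_∞ ≤ (U − F*)/τ. -/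

import Mathlib

/-!
Let `φ(z) = f̃(z|x) + r(z) + (L/(1+κ))‖z − x‖^{1+κ}` be the objective of `(P_x)`. The vector
`∇f̃(z*|x) + l + L‖d‖^{κ−1}d` is a subgradient of `φ` at `z*`: the three summands are subgradients
of the three terms, the last one by Bernoulli's inequality for `t ↦ t^{1+κ}`. Testing the
stationarity condition at the Slater point `x̂`, the gradient inequalities of the convex
surrogates `c̃ᵢ(·|x)` and complementary slackness give `φ(z*) + τ Σ λᵢ ≤ φ(x̂) ≤ U`. Finally
`φ(z*) ≥ F(z*) ≥ F*`, since the surrogates majorize and so `z*` is feasible for (P).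
-/

open scoped RealInnerProductSpace
open Real Set

/-- The convex subdifferential of `r` at `u`. -/
def subgrad {n : ℕ} (r : EuclideanSpace ℝ (Fin n) → ℝ)
    (u : EuclideanSpace ℝ (Fin n)) : Set (EuclideanSpace ℝ (Fin n)) :=
  {l | ∀ z, r u + ⟪l, z - u⟫ ≤ r z}

theorem ConvexOn.add_apply_sub_le_of_hasFDerivAt {E : Type*} [NormedAddCommGroup E]
    [NormedSpace ℝ E] {s : Set E} {g : E → ℝ} {g' : E →L[ℝ] ℝ} {x y : E}
    (hg : ConvexOn ℝ s g) (hx : x ∈ s) (hy : y ∈ s) (hg' : HasFDerivAt g g' x) :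
    g x + g' (y - x) ≤ g y := by
  set γ : ℝ →ᵃ[ℝ] E := AffineMap.lineMap x y
  have hγ0 : γ 0 = x := AffineMap.lineMap_apply_zero x y
  have hγ1 : γ 1 = y := AffineMap.lineMap_apply_one x y
  have hderiv : HasDerivAt (g ∘ γ) (g' (y - x)) 0 :=
    (hγ0 ▸ hg').comp_hasDerivAt 0 AffineMap.hasDerivAt_lineMap
  have hslope := (hg.comp_affineMap γ).le_slope_of_hasDerivAt
    (show γ 0 ∈ s from hγ0 ▸ hx) (show γ 1 ∈ s from hγ1 ▸ hy) one_pos hderiv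
  rw [slope_def_field, Function.comp_apply, Function.comp_apply, hγ0, hγ1] at hslope
  linarith

theorem ConvexOn.add_inner_sub_le_of_hasGradientAt {E : Type*} [NormedAddCommGroup E]
    [InnerProductSpace ℝ E] [CompleteSpace E] {s : Set E} {g : E → ℝ} {g' x y : E}
    (hg : ConvexOn ℝ s g) (hx : x ∈ s) (hy : y ∈ s) (hg' : HasGradientAt g g' x) :
    g x + ⟪g', y - x⟫ ≤ g y :=
  hg.add_apply_sub_le_of_hasFDerivAt hx hy hg'.hasFDerivAt

theorem Real.rpow_add_mul_rpow_sub_one_mul_sub_le {a b p : ℝ} (ha : 0 < a) (hb : 0 ≤ b)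
    (hp : 1 ≤ p) : a ^ p + p * a ^ (p - 1) * (b - a) ≤ b ^ p := by
  have hbern : 1 + p * (b / a - 1) ≤ (1 + (b / a - 1)) ^ p :=
    one_add_mul_self_le_rpow_one_add (by linarith [div_nonneg hb ha.le]) hp
  rw [add_sub_cancel, div_rpow hb ha.le, le_div_iff₀ (rpow_pos_of_pos ha p)] at hbern
  calc a ^ p + p * a ^ (p - 1) * (b - a) = (1 + p * (b / a - 1)) * a ^ p := by
        rw [rpow_sub_one ha.ne']; field_simp
    _ ≤ b ^ p := hbern

theorem norm_rpow_sub_one_mul_inner_sub_le {E : Type*} [NormedAddCommGroup E]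
    [InnerProductSpace ℝ E] (d w : E) {κ : ℝ} (hκ : 0 ≤ κ) :
    ‖d‖ ^ (κ - 1) * ⟪d, w - d⟫ ≤ (‖w‖ ^ (1 + κ) - ‖d‖ ^ (1 + κ)) / (1 + κ) := by
  rcases eq_or_ne d 0 with rfl | hd
  · simp only [norm_zero, inner_zero_left, mul_zero, zero_rpow (by linarith : 1 + κ ≠ 0),
      sub_zero]
    positivity
  have hd' : 0 < ‖d‖ := norm_pos_iff.mpr hd
  have hinner : ⟪d, w - d⟫ ≤ ‖d‖ * (‖w‖ - ‖d‖) := by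
    rw [inner_sub_right, real_inner_self_eq_norm_mul_norm]
    nlinarith [real_inner_le_norm d w]
  have htangent := Real.rpow_add_mul_rpow_sub_one_mul_sub_le hd' (norm_nonneg w)
    (by linarith : 1 ≤ 1 + κ)
  rw [add_sub_cancel_left] at htangent
  rw [le_div_iff₀ (by linarith)]
  calc ‖d‖ ^ (κ - 1) * ⟪d, w - d⟫ * (1 + κ)
      ≤ ‖d‖ ^ (κ - 1) * (‖d‖ * (‖w‖ - ‖d‖)) * (1 + κ) := by gcongr
    _ = (1 + κ) * ‖d‖ ^ κ * (‖w‖ - ‖d‖) := by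
        rw [rpow_sub_one hd'.ne']; field_simp
    _ ≤ ‖w‖ ^ (1 + κ) - ‖d‖ ^ (1 + κ) := by linarith

theorem add_mul_sum_le_of_kkt_of_slater {E ι : Type*} [NormedAddCommGroup E]
    [InnerProductSpace ℝ E] [Fintype ι] {φ : E → ℝ} {g : ι → E → ℝ} {s z y : E} {g' : ι → E}
    {μ : ι → ℝ} {τ : ℝ} (hφ : φ z + ⟪s, y - z⟫ ≤ φ y)
    (hg : ∀ i, g i z + ⟪g' i, y - z⟫ ≤ g i y) (hμ : ∀ i, 0 ≤ μ i)
    (hcomp : ∀ i, μ i * g i z = 0) (hslater : ∀ i, g i y ≤ -τ)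
    (hstat : 0 ≤ ⟪s + ∑ i, μ i • g' i, y - z⟫) :
    φ z + τ * ∑ i, μ i ≤ φ y := by
  -- complementary slackness turns each constraint's gradient inequality into a gain of `τ μᵢ`
  have hterm : ∀ i, μ i * ⟪g' i, y - z⟫ ≤ -(τ * μ i) := fun i => calc
    μ i * ⟪g' i, y - z⟫ ≤ μ i * (g i y - g i z) :=
        mul_le_mul_of_nonneg_left (by linarith [hg i]) (hμ i)
    _ = μ i * g i y := by rw [mul_sub, hcomp i, sub_zero]
    _ ≤ -(τ * μ i) := by nlinarith [hslater i, hμ i]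
  have hsum := Finset.sum_le_sum fun i (_ : i ∈ Finset.univ) => hterm i
  rw [Finset.sum_neg_distrib, ← Finset.mul_sum] at hsum
  rw [inner_add_left, sum_inner] at hstat
  simp only [real_inner_smul_left] at hstat
  linarith

section subgrad

variable {n : ℕ}

theorem subgrad_add {r₁ r₂ : EuclideanSpace ℝ (Fin n) → ℝ} {l₁ l₂ u : EuclideanSpace ℝ (Fin n)}
    (h₁ : l₁ ∈ subgrad r₁ u) (h₂ : l₂ ∈ subgrad r₂ u) :
    l₁ + l₂ ∈ subgrad (fun z => r₁ z + r₂ z) u := fun z => by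
  rw [inner_add_left]
  linarith [h₁ z, h₂ z]

theorem ConvexOn.mem_subgrad_of_hasGradientAt {g : EuclideanSpace ℝ (Fin n) → ℝ}
    {g' u : EuclideanSpace ℝ (Fin n)} (hg : ConvexOn ℝ univ g) (hg' : HasGradientAt g g' u) :
    g' ∈ subgrad g u := fun z =>
  hg.add_inner_sub_le_of_hasGradientAt (mem_univ u) (mem_univ z) hg'

theorem smul_rpow_norm_sub_mem_subgrad (x : EuclideanSpace ℝ (Fin n))
    {u : EuclideanSpace ℝ (Fin n)} {L κ : ℝ} (hL : 0 ≤ L) (hκ : 0 ≤ κ) :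
    (L * ‖u - x‖ ^ (κ - 1)) • (u - x) ∈
      subgrad (fun z => L / (1 + κ) * ‖z - x‖ ^ (1 + κ)) u := fun z => calc
  L / (1 + κ) * ‖u - x‖ ^ (1 + κ) + ⟪(L * ‖u - x‖ ^ (κ - 1)) • (u - x), z - u⟫
      = L / (1 + κ) * ‖u - x‖ ^ (1 + κ) + L * (‖u - x‖ ^ (κ - 1) * ⟪u - x, z - u⟫) := by
        rw [real_inner_smul_left, mul_assoc]
    _ ≤ L / (1 + κ) * ‖u - x‖ ^ (1 + κ) +
          L * ((‖z - x‖ ^ (1 + κ) - ‖u - x‖ ^ (1 + κ)) / (1 + κ)) := by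
        gcongr
        simpa only [sub_sub_sub_cancel_right] using
          norm_rpow_sub_one_mul_inner_sub_le (u - x) (z - x) hκ
    _ = L / (1 + κ) * ‖z - x‖ ^ (1 + κ) := by ring

end subgrad

theorem uniform_slater_dual_bound_general {n m : ℕ}
    (X : Set (EuclideanSpace ℝ (Fin n)))
    (f r : EuclideanSpace ℝ (Fin n) → ℝ)
    (c : Fin m → EuclideanSpace ℝ (Fin n) → ℝ)
    (κ : ℝ) (L : ℝ)
    (hκ0 : 0 < κ) (hL : 0 < L)
    (ft : EuclideanSpace ℝ (Fin n) → EuclideanSpace ℝ (Fin n) → ℝ)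
    (ct : Fin m → EuclideanSpace ℝ (Fin n) → EuclideanSpace ℝ (Fin n) → ℝ)
    (ft' : EuclideanSpace ℝ (Fin n) → EuclideanSpace ℝ (Fin n) → EuclideanSpace ℝ (Fin n))
    (ct' : Fin m → EuclideanSpace ℝ (Fin n) → EuclideanSpace ℝ (Fin n) →
      EuclideanSpace ℝ (Fin n))
    (hftconv : ∀ y, y ∈ X → (∀ i, c i y ≤ 0) → ConvexOn ℝ univ (ft y))
    (hftgrad : ∀ y, y ∈ X → (∀ i, c i y ≤ 0) → ∀ x, HasGradientAt (ft y) (ft' y x) x)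
    (hftmaj : ∀ y, y ∈ X → (∀ i, c i y ≤ 0) → ∀ x, f x ≤ ft y x)
    (hctconv : ∀ i y, y ∈ X → (∀ j, c j y ≤ 0) → ConvexOn ℝ univ (ct i y))
    (hctgrad : ∀ i y, y ∈ X → (∀ j, c j y ≤ 0) → ∀ x, HasGradientAt (ct i y) (ct' i y x) x)
    (hctmaj : ∀ i y, y ∈ X → (∀ j, c j y ≤ 0) → ∀ x, c i x ≤ ct i y x)
    -- `F*` is the optimal value of (P)
    (Fstar : ℝ)
    (hFlb : ∀ z ∈ X, (∀ i, c i z ≤ 0) → Fstar ≤ f z + r z)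
    -- a feasible base point `x`
    (x : EuclideanSpace ℝ (Fin n)) (hxX : x ∈ X) (hxfeas : ∀ i, c i x ≤ 0)
    -- the uniform Slater point `x̂` for the subproblem (P_x)
    (U τ : ℝ) (hτ : 0 < τ)
    (xhat : EuclideanSpace ℝ (Fin n)) (hxhatX : xhat ∈ X)
    (hxhatSlater : ∀ i, ct i x xhat ≤ -τ)
    (hxhatU : ft x xhat + r xhat + (L / (1 + κ)) * ‖xhat - x‖ ^ (1 + κ) ≤ U)
    -- the first-order (KKT) conditions of the subproblem (P_x)
    (zstar : EuclideanSpace ℝ (Fin n)) (hzX : zstar ∈ X)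
    (lam : Fin m → ℝ) (hlam : ∀ i, 0 ≤ lam i)
    (l : EuclideanSpace ℝ (Fin n)) (hl : l ∈ subgrad r zstar)
    (hstat : ∀ z ∈ X, 0 ≤
      ⟪ft' x zstar + l + (L * ‖zstar - x‖ ^ (κ - 1)) • (zstar - x) +
        ∑ i, lam i • ct' i x zstar, z - zstar⟫)
    (hconstr : ∀ i, ct i x zstar ≤ 0)
    (hcomp : ∀ i, lam i * ct i x zstar = 0) :
    (∑ i, lam i ≤ (U - Fstar) / τ) ∧ ∀ i, lam i ≤ (U - Fstar) / τ := by
  have hzfeas : ∀ i, c i zstar ≤ 0 := fun i =>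
    (hctmaj i x hxX hxfeas zstar).trans (hconstr i)
  set φ := fun z => ft x z + r z + L / (1 + κ) * ‖z - x‖ ^ (1 + κ)
  have hsub : ft' x zstar + l + (L * ‖zstar - x‖ ^ (κ - 1)) • (zstar - x) ∈ subgrad φ zstar :=
    subgrad_add (subgrad_add ((hftconv x hxX hxfeas).mem_subgrad_of_hasGradientAt
      (hftgrad x hxX hxfeas zstar)) hl) (smul_rpow_norm_sub_mem_subgrad x hL.le hκ0.le)
  have hbound := add_mul_sum_le_of_kkt_of_slater (hsub xhat)
    (fun i => (hctconv i x hxX hxfeas).add_inner_sub_le_of_hasGradientAt (mem_univ _)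
      (mem_univ _) (hctgrad i x hxX hxfeas zstar))
    hlam hcomp hxhatSlater (hstat xhat hxhatX)
  have hFz : Fstar ≤ φ zstar := by
    have hprox : 0 ≤ L / (1 + κ) * ‖zstar - x‖ ^ (1 + κ) := by positivity
    linarith [hFlb zstar hzX hzfeas, hftmaj x hxX hxfeas zstar]
  have hsum : ∑ i, lam i ≤ (U - Fstar) / τ := by
    rw [le_div_iff₀ hτ]
    linarith
  exact ⟨hsum, fun i => (Finset.single_le_sum (fun j _ => hlam j) (Finset.mem_univ i)).trans hsum⟩

/-- (Proposition 1 in the paper.) Under the surrogate assumption,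
a uniform Slater condition for the subproblem `(P_x)` yields the multiplier bound
`Σᵢ λᵢ ≤ (U − F*)/τ`, and in particular `‖λ‖_∞ ≤ (U − F*)/τ`. -/
theorem uniform_slater_dual_bound {n m : ℕ}
    (X : Set (EuclideanSpace ℝ (Fin n))) (hXconv : Convex ℝ X) (hXclosed : IsClosed X)
    (f r : EuclideanSpace ℝ (Fin n) → ℝ)
    (c : Fin m → EuclideanSpace ℝ (Fin n) → ℝ)
    (f' : EuclideanSpace ℝ (Fin n) → EuclideanSpace ℝ (Fin n))
    (c' : Fin m → EuclideanSpace ℝ (Fin n) → EuclideanSpace ℝ (Fin n))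
    (hf : ∀ x, HasGradientAt f (f' x) x) (hf'cont : Continuous f')
    (hc : ∀ i x, HasGradientAt (c i) (c' i x) x) (hc'cont : ∀ i, Continuous (c' i))
    (hrconv : ConvexOn ℝ univ r)
    (κ : ℝ) (κi : Fin m → ℝ) (L : ℝ) (Li Ni : Fin m → ℝ)
    (hκ0 : 0 < κ) (hκ1 : κ ≤ 1) (hκi0 : ∀ i, 0 < κi i) (hκi1 : ∀ i, κi i ≤ 1)
    (hL : 0 < L) (hLi : ∀ i, 0 < Li i) (hNi : ∀ i, 0 < Ni i)
    (ft : EuclideanSpace ℝ (Fin n) → EuclideanSpace ℝ (Fin n) → ℝ)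
    (ct : Fin m → EuclideanSpace ℝ (Fin n) → EuclideanSpace ℝ (Fin n) → ℝ)
    (ft' : EuclideanSpace ℝ (Fin n) → EuclideanSpace ℝ (Fin n) → EuclideanSpace ℝ (Fin n))
    (ct' : Fin m → EuclideanSpace ℝ (Fin n) → EuclideanSpace ℝ (Fin n) →
      EuclideanSpace ℝ (Fin n))
    (hftconv : ∀ y, y ∈ X → (∀ i, c i y ≤ 0) → ConvexOn ℝ univ (ft y))
    (hftgrad : ∀ y, y ∈ X → (∀ i, c i y ≤ 0) → ∀ x, HasGradientAt (ft y) (ft' y x) x)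
    (hftmaj : ∀ y, y ∈ X → (∀ i, c i y ≤ 0) → ∀ x, f x ≤ ft y x)
    (hfteq : ∀ y, y ∈ X → (∀ i, c i y ≤ 0) → ft y y = f y)
    (hftholder : ∀ y, y ∈ X → (∀ i, c i y ≤ 0) →
      ∀ x, ‖ft' y x - f' x‖ ≤ 2 * L * ‖x - y‖ ^ κ)
    (hctconv : ∀ i y, y ∈ X → (∀ j, c j y ≤ 0) → ConvexOn ℝ univ (ct i y))
    (hctgrad : ∀ i y, y ∈ X → (∀ j, c j y ≤ 0) → ∀ x, HasGradientAt (ct i y) (ct' i y x) x)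
    (hctmaj : ∀ i y, y ∈ X → (∀ j, c j y ≤ 0) → ∀ x, c i x ≤ ct i y x)
    (hcteq : ∀ i y, y ∈ X → (∀ j, c j y ≤ 0) → ct i y y = c i y)
    (hctholder : ∀ i y, y ∈ X → (∀ j, c j y ≤ 0) →
      ∀ x, ‖ct' i y x - c' i x‖ ≤ 2 * Li i * ‖x - y‖ ^ (κi i))
    (hctbnd : ∀ i x y, x ∈ X → (∀ j, c j x ≤ 0) → y ∈ X → (∀ j, c j y ≤ 0) →
      ‖ct' i y x‖ ≤ Ni i)
    -- `F*` is the optimal value of (P)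
    (Fstar : ℝ)
    (hFlb : ∀ z ∈ X, (∀ i, c i z ≤ 0) → Fstar ≤ f z + r z)
    (hFatt : ∃ z ∈ X, (∀ i, c i z ≤ 0) ∧ f z + r z = Fstar)
    -- a feasible base point `x`
    (x : EuclideanSpace ℝ (Fin n)) (hxX : x ∈ X) (hxfeas : ∀ i, c i x ≤ 0)
    -- the uniform Slater point `x̂` for the subproblem (P_x)
    (U τ : ℝ) (hU : 0 < U) (hτ : 0 < τ)
    (xhat : EuclideanSpace ℝ (Fin n)) (hxhatX : xhat ∈ X)
    (hxhatSlater : ∀ i, ct i x xhat ≤ -τ)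
    (hxhatU : ft x xhat + r xhat + (L / (1 + κ)) * ‖xhat - x‖ ^ (1 + κ) ≤ U)
    -- the first-order (KKT) conditions of the subproblem (P_x)
    (zstar : EuclideanSpace ℝ (Fin n)) (hzX : zstar ∈ X)
    (lam : Fin m → ℝ) (hlam : ∀ i, 0 ≤ lam i)
    (l : EuclideanSpace ℝ (Fin n)) (hl : l ∈ subgrad r zstar)
    (hstat : ∀ z ∈ X, 0 ≤
      ⟪ft' x zstar + l + (L * ‖zstar - x‖ ^ (κ - 1)) • (zstar - x) +
        ∑ i, lam i • ct' i x zstar, z - zstar⟫)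
    (hconstr : ∀ i, ct i x zstar ≤ 0)
    (hcomp : ∀ i, lam i * ct i x zstar = 0) :
    (∑ i, lam i ≤ (U - Fstar) / τ) ∧ ∀ i, lam i ≤ (U - Fstar) / τ :=
  uniform_slater_dual_bound_general X f r c κ L hκ0 hL ft ct ft' ct' hftconv hftgrad hftmaj hctconv
    hctgrad hctmaj Fstar hFlb x hxX hxfeas U τ hτ xhat hxhatX hxhatSlater hxhatU zstar hzX lam hlam
    l hl hstat hconstr hcomp
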